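/- Let U^μ and V^μ be smooth vector fields on ℝ^D, with lowered components U_μ := G_{μν}U^ν and V_μ := G_{μν}V^ν. Then the condition D⁺_ν U_μ = D⁻_μ V_ν for all μ,ν holds if and only if the pair (ζ, b) with ζ^μ := V^μ − U^μ and b_μ := U_μ + V_μ is a Killing pair, i.e. satisfies D⁻_μζ_ν + D⁺_νζ_μ + ∂_μb_ν − ∂_νb_μ = 0 for all μ,ν. -/

import Mathlib

noncomputable section

/-- Partial derivative of `f` at `x` in the `μ`-th coordinate direction. -/
def pd {D : ℕ} (μ : Fin D) (f : (Fin D → ℝ) → ℝ) (x : Fin D → ℝ) : ℝ :=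
  fderiv ℝ f x (Pi.single μ 1)

/-- A smooth real-valued function. -/
def Sm {D : ℕ} (f : (Fin D → ℝ) → ℝ) : Prop := ContDiff ℝ (⊤ : ℕ∞) f

/-- A smooth vector field on `ℝ^D`. -/
def SmoothVF {D : ℕ} (V : (Fin D → ℝ) → Fin D → ℝ) : Prop := ∀ μ, Sm fun x => V x μ

/-- A smooth field of 2-tensors on `ℝ^D`. -/
def Smooth2T {D : ℕ} (T : (Fin D → ℝ) → Fin D → Fin D → ℝ) : Prop :=
  ∀ μ ν, Sm fun x => T x μ ν

/-- The connection coefficients `Γ_{μν,ρ} = ½(∂_μG_{νρ} + ∂_νG_{μρ} − ∂_ρG_{μν})`. -/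
def Gam {D : ℕ} (G : (Fin D → ℝ) → Fin D → Fin D → ℝ) (μ ν ρ : Fin D) (x : Fin D → ℝ) : ℝ :=
  (pd μ (fun y => G y ν ρ) x + pd ν (fun y => G y μ ρ) x - pd ρ (fun y => G y μ ν) x) / 2

/-- The torsion `H_{μνρ} = ∂_μB_{νρ} + ∂_νB_{ρμ} + ∂_ρB_{μν}`. -/
def Htor {D : ℕ} (B : (Fin D → ℝ) → Fin D → Fin D → ℝ) (μ ν ρ : Fin D) (x : Fin D → ℝ) : ℝ :=
  pd μ (fun y => B y ν ρ) x + pd ν (fun y => B y ρ μ) x + pd ρ (fun y => B y μ ν) x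

/-- `Γ⁺_{μν,ρ} = Γ_{μν,ρ} + ½H_{μνρ}`. -/
def GamP {D : ℕ} (G B : (Fin D → ℝ) → Fin D → Fin D → ℝ) (μ ν ρ : Fin D) (x : Fin D → ℝ) : ℝ :=
  Gam G μ ν ρ x + Htor B μ ν ρ x / 2

/-- `Γ⁻_{μν,ρ} = Γ_{μν,ρ} − ½H_{μνρ}`. -/
def GamM {D : ℕ} (G B : (Fin D → ℝ) → Fin D → Fin D → ℝ) (μ ν ρ : Fin D) (x : Fin D → ℝ) : ℝ :=
  Gam G μ ν ρ x - Htor B μ ν ρ x / 2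

/-- The lowered components `V_μ = G_{μν}V^ν` of a vector field. -/
def lowerV {D : ℕ} (G : (Fin D → ℝ) → Fin D → Fin D → ℝ)
    (V : (Fin D → ℝ) → Fin D → ℝ) (μ : Fin D) (x : Fin D → ℝ) : ℝ :=
  ∑ ν, G x μ ν * V x ν

/-- The covariant derivative `D⁺_μV_ν = G_{νρ}∂_μV^ρ + Γ⁺_{μρ,ν}V^ρ`. -/
def Dp {D : ℕ} (G B : (Fin D → ℝ) → Fin D → Fin D → ℝ)
    (V : (Fin D → ℝ) → Fin D → ℝ) (μ ν : Fin D) (x : Fin D → ℝ) : ℝ :=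
  (∑ ρ, G x ν ρ * pd μ (fun y => V y ρ) x) + ∑ ρ, GamP G B μ ρ ν x * V x ρ

/-- The covariant derivative `D⁻_μV_ν = G_{νρ}∂_μV^ρ + Γ⁻_{μρ,ν}V^ρ`. -/
def Dm {D : ℕ} (G B : (Fin D → ℝ) → Fin D → Fin D → ℝ)
    (V : (Fin D → ℝ) → Fin D → ℝ) (μ ν : Fin D) (x : Fin D → ℝ) : ℝ :=
  (∑ ρ, G x ν ρ * pd μ (fun y => V y ρ) x) + ∑ ρ, GamM G B μ ρ ν x * V x ρ

/-- The Lie derivative of the metric: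
`(ℒ_ζG)_{μν} = ζ^ρ∂_ρG_{μν} + ∂_μζ^ρ·G_{ρν} + ∂_νζ^ρ·G_{μρ}`. -/
def lieG {D : ℕ} (G : (Fin D → ℝ) → Fin D → Fin D → ℝ)
    (ζ : (Fin D → ℝ) → Fin D → ℝ) (μ ν : Fin D) (x : Fin D → ℝ) : ℝ :=
  (∑ ρ, ζ x ρ * pd ρ (fun y => G y μ ν) x)
    + (∑ ρ, pd μ (fun y => ζ y ρ) x * G x ρ ν)
    + ∑ ρ, pd ν (fun y => ζ y ρ) x * G x μ ρ

/-- A Killing pair `(ζ, b)`: `D⁻_μζ_ν + D⁺_νζ_μ + ∂_μb_ν − ∂_νb_μ = 0`. -/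
def IsKillingPair {D : ℕ} (G B : (Fin D → ℝ) → Fin D → Fin D → ℝ)
    (ζ b : (Fin D → ℝ) → Fin D → ℝ) : Prop :=
  ∀ (μ ν : Fin D) (x : Fin D → ℝ),
    Dm G B ζ μ ν x + Dp G B ζ ν μ x
      + pd μ (fun y => b y ν) x - pd ν (fun y => b y μ) x = 0

/-!
Writing `W♭` for the lowered field, the curl of `W♭` can be computed with the two torsionful
connections: `∂_μW_ν − ∂_νW_μ = D⁻_μW_ν − D⁺_νW_μ`. The metric parts of `Γ⁻_{μρ,ν}` and
`Γ⁺_{νρ,μ}` reproduce the ordinary curl because `G` is symmetric, and their torsion parts cancel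
because `H` is totally antisymmetric when `B` is. Applying this to `U` and `V` and using that
`D^±` are linear in the vector field, the Killing expression of `(V − U, U♭ + V♭)` equals
`2 (D⁻_μV_ν − D⁺_νU_μ)`.
-/

section PartialDerivative

variable {D : ℕ} {f g : (Fin D → ℝ) → ℝ} {x : Fin D → ℝ} (μ : Fin D)

lemma Sm.differentiableAt (hf : Sm f) : DifferentiableAt ℝ f x :=
  (hf.differentiable (by simp)).differentiableAt

lemma pd_add (hf : DifferentiableAt ℝ f x) (hg : DifferentiableAt ℝ g x) :
    pd μ (fun y => f y + g y) x = pd μ f x + pd μ g x := by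
  simp [pd, fderiv_fun_add hf hg]

lemma pd_sub (hf : DifferentiableAt ℝ f x) (hg : DifferentiableAt ℝ g x) :
    pd μ (fun y => f y - g y) x = pd μ f x - pd μ g x := by
  simp [pd, fderiv_fun_sub hf hg]

lemma pd_mul (hf : DifferentiableAt ℝ f x) (hg : DifferentiableAt ℝ g x) :
    pd μ (fun y => f y * g y) x = pd μ f x * g x + f x * pd μ g x := by
  simp [pd, fderiv_fun_mul hf hg]
  ring

lemma pd_neg : pd μ (fun y => -f y) x = -pd μ f x := by
  simp [pd]

lemma pd_sum {ι : Type*} (s : Finset ι) {F : ι → (Fin D → ℝ) → ℝ}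
    (hF : ∀ i ∈ s, DifferentiableAt ℝ (F i) x) :
    pd μ (fun y => ∑ i ∈ s, F i y) x = ∑ i ∈ s, pd μ (F i) x := by
  simp [pd, fderiv_fun_sum hF]

end PartialDerivative

section Connection

variable {D : ℕ} (G B : (Fin D → ℝ) → Fin D → Fin D → ℝ) {x : Fin D → ℝ}

lemma Gam_sub_Gam_swap (hGsym : ∀ x μ ν, G x μ ν = G x ν μ) (μ ν ρ : Fin D) :
    Gam G ν ρ μ x - Gam G μ ρ ν x
      = pd ν (fun y => G y μ ρ) x - pd μ (fun y => G y ν ρ) x := by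
  have hsym : ∀ a b : Fin D, (fun y => G y a b) = fun y => G y b a :=
    fun a b => funext fun y => hGsym y a b
  simp only [Gam, hsym ρ μ, hsym ρ ν, hsym ν μ]
  ring

lemma Htor_swap_outer (hBanti : ∀ x μ ν, B x μ ν = -B x ν μ) (μ ν ρ : Fin D) :
    Htor B ν ρ μ x = -Htor B μ ρ ν x := by
  have hanti : ∀ σ a b : Fin D,
      pd σ (fun y => B y a b) x = -pd σ (fun y => B y b a) x := by
    intro σ a b
    rw [show (fun y => B y a b) = fun y => -B y b a from funext fun y => hBanti y a b, pd_neg]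
  simp only [Htor, hanti ν ρ μ, hanti ρ μ ν, hanti μ ν ρ]
  ring

lemma pd_lowerV {W : (Fin D → ℝ) → Fin D → ℝ}
    (hG : ∀ a b, DifferentiableAt ℝ (fun y => G y a b) x)
    (hW : ∀ a, DifferentiableAt ℝ (fun y => W y a) x) (σ a : Fin D) :
    pd σ (fun y => lowerV G W a y) x
      = ∑ ρ, (pd σ (fun y => G y a ρ) x * W x ρ + G x a ρ * pd σ (fun y => W y ρ) x) := by
  simp only [lowerV]
  rw [pd_sum σ _ fun ρ _ => (hG a ρ).fun_mul (hW ρ)]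
  exact Finset.sum_congr rfl fun ρ _ => pd_mul σ (hG a ρ) (hW ρ)

lemma differentiableAt_lowerV {W : (Fin D → ℝ) → Fin D → ℝ}
    (hG : ∀ a b, DifferentiableAt ℝ (fun y => G y a b) x)
    (hW : ∀ a, DifferentiableAt ℝ (fun y => W y a) x) (a : Fin D) :
    DifferentiableAt ℝ (fun y => lowerV G W a y) x := by
  simp only [lowerV]
  exact DifferentiableAt.fun_sum fun ρ _ => (hG a ρ).mul (hW ρ)

theorem pd_lowerV_sub_pd_lowerV {W : (Fin D → ℝ) → Fin D → ℝ}
    (hG : ∀ a b, DifferentiableAt ℝ (fun y => G y a b) x)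
    (hGsym : ∀ x μ ν, G x μ ν = G x ν μ) (hBanti : ∀ x μ ν, B x μ ν = -B x ν μ)
    (hW : ∀ a, DifferentiableAt ℝ (fun y => W y a) x) (μ ν : Fin D) :
    pd μ (fun y => lowerV G W ν y) x - pd ν (fun y => lowerV G W μ y) x
      = Dm G B W μ ν x - Dp G B W ν μ x := by
  rw [pd_lowerV G hG hW, pd_lowerV G hG hW]
  simp only [Dm, Dp, GamM, GamP, ← Finset.sum_sub_distrib, ← Finset.sum_add_distrib]
  refine Finset.sum_congr rfl fun ρ _ => ?_
  linear_combination W x ρ * (Gam_sub_Gam_swap G hGsym μ ν ρ)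
    + (W x ρ / 2) * Htor_swap_outer B hBanti μ ν ρ

variable {U V : (Fin D → ℝ) → Fin D → ℝ}

lemma Dm_sub
    (hU : ∀ a, DifferentiableAt ℝ (fun y => U y a) x)
    (hV : ∀ a, DifferentiableAt ℝ (fun y => V y a) x) (μ ν : Fin D) :
    Dm G B (fun x μ => V x μ - U x μ) μ ν x = Dm G B V μ ν x - Dm G B U μ ν x := by
  simp only [Dm, pd_sub μ (hV _) (hU _), mul_sub, Finset.sum_sub_distrib]
  ring

lemma Dp_sub
    (hU : ∀ a, DifferentiableAt ℝ (fun y => U y a) x)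
    (hV : ∀ a, DifferentiableAt ℝ (fun y => V y a) x) (μ ν : Fin D) :
    Dp G B (fun x μ => V x μ - U x μ) μ ν x = Dp G B V μ ν x - Dp G B U μ ν x := by
  simp only [Dp, pd_sub μ (hV _) (hU _), mul_sub, Finset.sum_sub_distrib]
  ring

theorem killing_expr_eq
    (hU : ∀ a, DifferentiableAt ℝ (fun y => U y a) x)
    (hV : ∀ a, DifferentiableAt ℝ (fun y => V y a) x)
    (hG : ∀ a b, DifferentiableAt ℝ (fun y => G y a b) x)
    (hGsym : ∀ x μ ν, G x μ ν = G x ν μ) (hBanti : ∀ x μ ν, B x μ ν = -B x ν μ)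
    (μ ν : Fin D) :
    Dm G B (fun x μ => V x μ - U x μ) μ ν x + Dp G B (fun x μ => V x μ - U x μ) ν μ x
        + pd μ (fun y => lowerV G U ν y + lowerV G V ν y) x
        - pd ν (fun y => lowerV G U μ y + lowerV G V μ y) x
      = 2 * (Dm G B V μ ν x - Dp G B U ν μ x) := by
  have curlU := pd_lowerV_sub_pd_lowerV G B hG hGsym hBanti hU μ ν
  have curlV := pd_lowerV_sub_pd_lowerV G B hG hGsym hBanti hV μ ν
  rw [Dm_sub G B hU hV, Dp_sub G B hU hV,
    pd_add μ (differentiableAt_lowerV G hG hU ν) (differentiableAt_lowerV G hG hV ν),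
    pd_add ν (differentiableAt_lowerV G hG hU μ) (differentiableAt_lowerV G hG hV μ)]
  linear_combination curlU + curlV

end Connection

theorem stmt18_general {D : ℕ}
    (G B : (Fin D → ℝ) → Fin D → Fin D → ℝ)
    (hGs : Smooth2T G) (hGsym : ∀ x μ ν, G x μ ν = G x ν μ)
    (hBanti : ∀ x μ ν, B x μ ν = -B x ν μ)
    (U V : (Fin D → ℝ) → Fin D → ℝ) (hU : SmoothVF U) (hV : SmoothVF V) :
    (∀ μ ν x, Dp G B U ν μ x = Dm G B V μ ν x) ↔
      IsKillingPair G B (fun x μ => V x μ - U x μ)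
        (fun x μ => lowerV G U μ x + lowerV G V μ x) := by
  have key : ∀ μ ν x, _ = 2 * (Dm G B V μ ν x - Dp G B U ν μ x) := fun μ ν x =>
    killing_expr_eq G B (fun a => (hU a).differentiableAt) (fun a => (hV a).differentiableAt)
      (fun a b => (hGs a b).differentiableAt) hGsym hBanti μ ν
  refine forall₂_congr fun μ ν => forall_congr' fun x => ?_
  rw [key μ ν x]
  constructor <;> intro h <;> linarith

/-- `D⁺_νU_μ = D⁻_μV_ν` for all `μ,ν` iff `(V − U, U_lowered + V_lowered)` is a Killing pair. -/
theorem stmt18 {D : ℕ} (hD : 1 ≤ D)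
    (G B : (Fin D → ℝ) → Fin D → Fin D → ℝ)
    (hGs : Smooth2T G) (hGsym : ∀ x μ ν, G x μ ν = G x ν μ)
    (hBs : Smooth2T B) (hBanti : ∀ x μ ν, B x μ ν = -B x ν μ)
    (U V : (Fin D → ℝ) → Fin D → ℝ) (hU : SmoothVF U) (hV : SmoothVF V) :
    (∀ μ ν x, Dp G B U ν μ x = Dm G B V μ ν x) ↔
      IsKillingPair G B (fun x μ => V x μ - U x μ)
        (fun x μ => lowerV G U μ x + lowerV G V μ x) :=
  stmt18_general G B hGs hGsym hBanti U V hU hV
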